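/- On Minkowski ℝ⁴, let B be a smooth (0,4)-tensor field satisfying at every point the symmetries B_{αβλμ} = B_{(αβ)(λμ)} = B_{λμαβ} and having vanishing divergence: ∂^μ B_{αβλμ} = 0 everywhere. Then for any three Killing vector fields ξ₁, ξ₂, ξ₃ of η, the current j_μ = B_{(αβλ)μ} ξ₁^α ξ₂^β ξ₃^λ is conserved: ∂^μ j_μ = 0 everywhere. -/

import Mathlib

noncomputable section

/-- The `ν`-th coordinate vector of ℝ⁴. -/
def coordV (ν : Fin 4) : Fin 4 → ℝ := Pi.single ν 1

/-- The coordinate partial derivative `∂_ν f` at `p`. -/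
def pd (ν : Fin 4) (f : (Fin 4 → ℝ) → ℝ) (p : Fin 4 → ℝ) : ℝ :=
  fderiv ℝ f p (coordV ν)

/-- The Minkowski metric `η = diag(1, −1, −1, −1)` on ℝ⁴ (its own inverse,
so it is also used to raise indices). -/
def mink (μ ν : Fin 4) : ℝ := if μ = ν then (if μ = 0 then 1 else -1) else 0

/-- The index of `ξ` lowered with the Minkowski metric: `ξ_β = η_{βρ} ξ^ρ`. -/
def lowerIdx (ξ : (Fin 4 → ℝ) → Fin 4 → ℝ) (q : Fin 4 → ℝ) (β : Fin 4) : ℝ :=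
  ∑ ρ, mink β ρ * ξ q ρ

/-- `ξ` is a Killing vector field of the Minkowski metric:
`∂_α ξ_β + ∂_β ξ_α = 0` everywhere. -/
def IsKilling (ξ : (Fin 4 → ℝ) → Fin 4 → ℝ) : Prop :=
  ∀ p α β, pd α (fun q => lowerIdx ξ q β) p + pd β (fun q => lowerIdx ξ q α) p = 0

/-- The current `j_μ = B_{(αβλ)μ} ξ₁^α ξ₂^β ξ₃^λ` built from a (0,4)-tensor
field `B` (symmetrized over its first three indices) and three vector fields. -/
def current (B : (Fin 4 → ℝ) → Fin 4 → Fin 4 → Fin 4 → Fin 4 → ℝ)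
    (ξ₁ ξ₂ ξ₃ : (Fin 4 → ℝ) → Fin 4 → ℝ) (q : Fin 4 → ℝ) (μ : Fin 4) : ℝ :=
  ∑ α, ∑ β, ∑ lam,
    ((1/6 : ℝ) * ∑ σ : Equiv.Perm (Fin 3),
        B q (![α, β, lam] (σ 0)) (![α, β, lam] (σ 1)) (![α, β, lam] (σ 2)) μ)
      * ξ₁ q α * ξ₂ q β * ξ₃ q lam

section Helpers
open Equiv
theorem mink_sq (μ : Fin 4) : mink μ μ * mink μ μ = 1 := by
  unfold mink; by_cases h : μ = 0 <;> simp [h]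

theorem mink_contract (g : Fin 4 → ℝ) (μ : Fin 4) :
    ∑ ν, mink μ ν * g ν = mink μ μ * g μ := by
  rw [Finset.sum_eq_single μ]
  · intro b _ hb
    simp [mink, Ne.symm hb]
  · intro h; exact absurd (Finset.mem_univ μ) h

theorem pd_const_mul (ν : Fin 4) (c : ℝ) (f : (Fin 4 → ℝ) → ℝ) (p : Fin 4 → ℝ)
    (hf : DifferentiableAt ℝ f p) :
    pd ν (fun q => c * f q) p = c * pd ν f p := by
  unfold pd
  rw [fderiv_const_mul hf c]
  simp

theorem pd_mul (ν : Fin 4) (f g : (Fin 4 → ℝ) → ℝ) (p : Fin 4 → ℝ)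
    (hf : DifferentiableAt ℝ f p) (hg : DifferentiableAt ℝ g p) :
    pd ν (fun q => f q * g q) p = pd ν f p * g p + f p * pd ν g p := by
  unfold pd
  rw [fderiv_fun_mul hf hg]
  simp
  ring

theorem pd_sum {ι : Type*} (ν : Fin 4) (s : Finset ι) (f : ι → (Fin 4 → ℝ) → ℝ)
    (p : Fin 4 → ℝ) (hf : ∀ i ∈ s, DifferentiableAt ℝ (f i) p) :
    pd ν (fun q => ∑ i ∈ s, f i q) p = ∑ i ∈ s, pd ν (f i) p := by
  unfold pd
  rw [fderiv_fun_sum hf]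
  simp

theorem pd_mul4 (ν : Fin 4) (f g h k : (Fin 4 → ℝ) → ℝ) (p : Fin 4 → ℝ)
    (hf : DifferentiableAt ℝ f p) (hg : DifferentiableAt ℝ g p)
    (hh : DifferentiableAt ℝ h p) (hk : DifferentiableAt ℝ k p) :
    pd ν (fun q => f q * g q * h q * k q) p =
      pd ν f p * g p * h p * k p + f p * pd ν g p * h p * k p
      + f p * g p * pd ν h p * k p + f p * g p * h p * pd ν k p := by
  rw [pd_mul ν (fun q => f q * g q * h q) k p (((hf.mul hg).mul hh)) hk,
    pd_mul ν (fun q => f q * g q) h p (hf.mul hg) hh,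
    pd_mul ν f g p hf hg]
  ring

theorem perm3_sum (f : Equiv.Perm (Fin 3) → ℝ) :
    ∑ σ : Equiv.Perm (Fin 3), f σ =
      f 1 + f (swap 0 1) + f (swap 0 2) + f (swap 1 2)
      + f (swap 0 1 * swap 1 2) + f (swap 1 2 * swap 0 1) := by
  have h : (Finset.univ : Finset (Equiv.Perm (Fin 3))) =
      {1, swap 0 1, swap 0 2, swap 1 2, swap 0 1 * swap 1 2, swap 1 2 * swap 0 1} := by decide
  rw [h, Finset.sum_insert (by decide), Finset.sum_insert (by decide),
    Finset.sum_insert (by decide), Finset.sum_insert (by decide),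
    Finset.sum_insert (by decide), Finset.sum_singleton]
  ring

theorem perm3_expand (T : Fin 4 → Fin 4 → Fin 4 → Fin 4 → ℝ) (α β lam μ : Fin 4) :
    (∑ σ : Equiv.Perm (Fin 3),
      T (![α, β, lam] (σ 0)) (![α, β, lam] (σ 1)) (![α, β, lam] (σ 2)) μ)
    = T α β lam μ + T β α lam μ + T lam β α μ + T α lam β μ
      + T β lam α μ + T lam α β μ := by
  rw [perm3_sum]
  simp only [show ((1 : Perm (Fin 3)) 0) = 0 from by decide,
    show ((1 : Perm (Fin 3)) 1) = 1 from by decide,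
    show ((1 : Perm (Fin 3)) 2) = 2 from by decide,
    show ((swap 0 1 : Perm (Fin 3)) 0) = 1 from by decide,
    show ((swap 0 1 : Perm (Fin 3)) 1) = 0 from by decide,
    show ((swap 0 1 : Perm (Fin 3)) 2) = 2 from by decide,
    show ((swap 0 2 : Perm (Fin 3)) 0) = 2 from by decide,
    show ((swap 0 2 : Perm (Fin 3)) 1) = 1 from by decide,
    show ((swap 0 2 : Perm (Fin 3)) 2) = 0 from by decide,
    show ((swap 1 2 : Perm (Fin 3)) 0) = 0 from by decide,
    show ((swap 1 2 : Perm (Fin 3)) 1) = 2 from by decide,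
    show ((swap 1 2 : Perm (Fin 3)) 2) = 1 from by decide,
    show ((swap 0 1 * swap 1 2 : Perm (Fin 3)) 0) = 1 from by decide,
    show ((swap 0 1 * swap 1 2 : Perm (Fin 3)) 1) = 2 from by decide,
    show ((swap 0 1 * swap 1 2 : Perm (Fin 3)) 2) = 0 from by decide,
    show ((swap 1 2 * swap 0 1 : Perm (Fin 3)) 0) = 2 from by decide,
    show ((swap 1 2 * swap 0 1 : Perm (Fin 3)) 1) = 0 from by decide,
    show ((swap 1 2 * swap 0 1 : Perm (Fin 3)) 2) = 1 from by decide,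
    Matrix.cons_val_zero, Matrix.cons_val_one, Matrix.head_cons]
  norm_num [Matrix.cons_val_succ, Matrix.cons_val_two, Matrix.tail_cons, Matrix.head_cons]

theorem permsum_swap12 (T : Fin 4 → Fin 4 → Fin 4 → Fin 4 → ℝ) (α β lam μ : Fin 4) :
    (∑ σ : Equiv.Perm (Fin 3),
      T (![α, β, lam] (σ 0)) (![α, β, lam] (σ 1)) (![α, β, lam] (σ 2)) μ)
    = ∑ σ : Equiv.Perm (Fin 3),
      T (![β, α, lam] (σ 0)) (![β, α, lam] (σ 1)) (![β, α, lam] (σ 2)) μ := by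
  rw [perm3_expand, perm3_expand]; ring

theorem permsum_swap13 (T : Fin 4 → Fin 4 → Fin 4 → Fin 4 → ℝ) (α β lam μ : Fin 4) :
    (∑ σ : Equiv.Perm (Fin 3),
      T (![α, β, lam] (σ 0)) (![α, β, lam] (σ 1)) (![α, β, lam] (σ 2)) μ)
    = ∑ σ : Equiv.Perm (Fin 3),
      T (![lam, β, α] (σ 0)) (![lam, β, α] (σ 1)) (![lam, β, α] (σ 2)) μ := by
  rw [perm3_expand, perm3_expand]; ring

theorem permsum_swap14 (T : Fin 4 → Fin 4 → Fin 4 → Fin 4 → ℝ)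
    (h1 : ∀ a b c d, T a b c d = T b a c d)
    (h2 : ∀ a b c d, T a b c d = T a b d c)
    (hE : ∀ a b c d, T a b c d = T c d a b) (α β lam μ : Fin 4) :
    (∑ σ : Equiv.Perm (Fin 3),
      T (![α, β, lam] (σ 0)) (![α, β, lam] (σ 1)) (![α, β, lam] (σ 2)) μ)
    = ∑ σ : Equiv.Perm (Fin 3),
      T (![μ, β, lam] (σ 0)) (![μ, β, lam] (σ 1)) (![μ, β, lam] (σ 2)) α := by
  rw [perm3_expand, perm3_expand]
  have r1 : T μ β lam α = T α lam β μ := by rw [h2 μ β lam α, hE μ β α lam, h2 α lam μ β]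
  have r2 : T β μ lam α = T α lam β μ := by rw [h1 β μ lam α, r1]
  have r3 : T lam β μ α = T β lam α μ := by rw [h2 lam β μ α, h1 lam β α μ]
  have r4 : T μ lam β α = T α β lam μ := by rw [h2 μ lam β α, hE μ lam α β, h2 α β μ lam]
  have r5 : T β lam μ α = T β lam α μ := h2 β lam μ α
  have r6 : T lam μ β α = T α β lam μ := by rw [h2 lam μ β α, hE lam μ α β]
  have l2 : T β α lam μ = T α β lam μ := (h1 α β lam μ).symm
  have l3 : T lam β α μ = T β lam α μ := (h1 β lam α μ).symm
  have l6 : T lam α β μ = T α lam β μ := (h1 α lam β μ).symm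
  linarith

theorem permsum_swap24 (T : Fin 4 → Fin 4 → Fin 4 → Fin 4 → ℝ)
    (h1 : ∀ a b c d, T a b c d = T b a c d)
    (h2 : ∀ a b c d, T a b c d = T a b d c)
    (hE : ∀ a b c d, T a b c d = T c d a b) (α β lam μ : Fin 4) :
    (∑ σ : Equiv.Perm (Fin 3),
      T (![α, β, lam] (σ 0)) (![α, β, lam] (σ 1)) (![α, β, lam] (σ 2)) μ)
    = ∑ σ : Equiv.Perm (Fin 3),
      T (![α, μ, lam] (σ 0)) (![α, μ, lam] (σ 1)) (![α, μ, lam] (σ 2)) β := by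
  rw [permsum_swap12 T α β lam μ, permsum_swap14 T h1 h2 hE β α lam μ,
    permsum_swap12 T μ α lam β]

theorem permsum_swap34 (T : Fin 4 → Fin 4 → Fin 4 → Fin 4 → ℝ)
    (h1 : ∀ a b c d, T a b c d = T b a c d)
    (h2 : ∀ a b c d, T a b c d = T a b d c)
    (hE : ∀ a b c d, T a b c d = T c d a b) (α β lam μ : Fin 4) :
    (∑ σ : Equiv.Perm (Fin 3),
      T (![α, β, lam] (σ 0)) (![α, β, lam] (σ 1)) (![α, β, lam] (σ 2)) μ)
    = ∑ σ : Equiv.Perm (Fin 3),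
      T (![α, β, μ] (σ 0)) (![α, β, μ] (σ 1)) (![α, β, μ] (σ 2)) lam := by
  rw [permsum_swap13 T α β lam μ, permsum_swap14 T h1 h2 hE lam β α μ,
    permsum_swap13 T μ β α lam]

theorem contract_zero (S D : Fin 4 → Fin 4 → ℝ)
    (hS : ∀ a b, S a b = S b a)
    (hK : ∀ a b, mink b b * D a b + mink a a * D b a = 0) :
    ∑ μ, ∑ α, mink μ μ * S α μ * D μ α = 0 := by
  have key : ∀ a b, mink b b * S a b * D b a = -(mink a a * S b a * D a b) := by
    intro a b
    have h1 : mink a a * D b a = -(mink b b * D a b) := by linarith [hK a b]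
    calc mink b b * S a b * D b a
        = mink b b * S a b * ((mink a a * mink a a) * D b a) := by rw [mink_sq]; ring
      _ = mink b b * S a b * (mink a a * (mink a a * D b a)) := by ring
      _ = mink b b * S a b * (mink a a * (-(mink b b * D a b))) := by rw [h1]
      _ = -((mink b b * mink b b) * (mink a a * S a b * D a b)) := by ring
      _ = -(mink a a * S b a * D a b) := by rw [mink_sq, hS a b]; ring
  have h2 : (∑ μ, ∑ α, mink μ μ * S α μ * D μ α)
      = -∑ μ, ∑ α, mink μ μ * S α μ * D μ α := by
    conv_lhs => rw [Finset.sum_comm]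
    rw [← Finset.sum_neg_distrib]
    refine Finset.sum_congr rfl fun x _ => ?_
    rw [← Finset.sum_neg_distrib]
    refine Finset.sum_congr rfl fun y _ => ?_
    exact key x y
  linarith

theorem sum_swap3 (g : Fin 4 → Fin 4 → Fin 4 → ℝ) :
    (∑ a, ∑ b, ∑ c, g a b c) = ∑ b, ∑ c, ∑ a, g a b c := by
  rw [Finset.sum_comm]
  exact Finset.sum_congr rfl fun b _ => Finset.sum_comm

theorem sum_swap4_0 (f : Fin 4 → Fin 4 → Fin 4 → Fin 4 → ℝ) :
    (∑ μ, ∑ α, ∑ β, ∑ lam, f μ α β lam) = ∑ α, ∑ β, ∑ lam, ∑ μ, f μ α β lam := by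
  rw [Finset.sum_comm]
  refine Finset.sum_congr rfl fun α _ => ?_
  rw [Finset.sum_comm]
  exact Finset.sum_congr rfl fun β _ => Finset.sum_comm

theorem sum_swap4_1 (f : Fin 4 → Fin 4 → Fin 4 → Fin 4 → ℝ) :
    (∑ μ, ∑ α, ∑ β, ∑ lam, f μ α β lam) = ∑ β, ∑ lam, ∑ μ, ∑ α, f μ α β lam := by
  calc (∑ μ, ∑ α, ∑ β, ∑ lam, f μ α β lam)
      = ∑ μ, ∑ β, ∑ lam, ∑ α, f μ α β lam :=
        Finset.sum_congr rfl fun μ _ => sum_swap3 (fun α β lam => f μ α β lam)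
    _ = ∑ β, ∑ lam, ∑ μ, ∑ α, f μ α β lam := sum_swap3 (fun μ β lam => ∑ α, f μ α β lam)

theorem sum_swap4_2 (f : Fin 4 → Fin 4 → Fin 4 → Fin 4 → ℝ) :
    (∑ μ, ∑ α, ∑ β, ∑ lam, f μ α β lam) = ∑ α, ∑ lam, ∑ μ, ∑ β, f μ α β lam := by
  rw [Finset.sum_comm]
  refine Finset.sum_congr rfl fun α _ => ?_
  calc (∑ μ, ∑ β, ∑ lam, f μ α β lam)
      = ∑ μ, ∑ lam, ∑ β, f μ α β lam :=
        Finset.sum_congr rfl fun μ _ => Finset.sum_comm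
    _ = ∑ lam, ∑ μ, ∑ β, f μ α β lam := Finset.sum_comm

theorem sum_swap4_3 (f : Fin 4 → Fin 4 → Fin 4 → Fin 4 → ℝ) :
    (∑ μ, ∑ α, ∑ β, ∑ lam, f μ α β lam) = ∑ α, ∑ β, ∑ μ, ∑ lam, f μ α β lam := by
  rw [Finset.sum_comm]
  exact Finset.sum_congr rfl fun α _ => Finset.sum_comm

end Helpers

/-- The symmetrization `B_{(αβλ)μ}` as a scalar field. -/
def Fsym (B : (Fin 4 → ℝ) → Fin 4 → Fin 4 → Fin 4 → Fin 4 → ℝ)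
    (α β lam μ : Fin 4) (q : Fin 4 → ℝ) : ℝ :=
  (1/6 : ℝ) * ∑ σ : Equiv.Perm (Fin 3),
    B q (![α, β, lam] (σ 0)) (![α, β, lam] (σ 1)) (![α, β, lam] (σ 2)) μ

/-- on Minkowski ℝ⁴, if a smooth (0,4)-tensor field `B` has the
symmetries `B_{αβλμ} = B_{(αβ)(λμ)} = B_{λμαβ}` and vanishing divergence
`∂^μ B_{αβλμ} = 0`, then for any three Killing vector fields `ξ₁, ξ₂, ξ₃` the
current `j_μ = B_{(αβλ)μ} ξ₁^α ξ₂^β ξ₃^λ` is conserved: `∂^μ j_μ = 0`. -/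
theorem current_conserved_of_divergence_free
    (B : (Fin 4 → ℝ) → Fin 4 → Fin 4 → Fin 4 → Fin 4 → ℝ)
    (hBsmooth : ∀ α β lam μ, ContDiff ℝ (⊤ : ℕ∞) fun p => B p α β lam μ)
    (hBpair1 : ∀ p α β lam μ, B p α β lam μ = B p β α lam μ)
    (hBpair2 : ∀ p α β lam μ, B p α β lam μ = B p α β μ lam)
    (hBexch : ∀ p α β lam μ, B p α β lam μ = B p lam μ α β)
    (hBdiv : ∀ p α β lam,
      (∑ μ, ∑ ν, mink μ ν * pd ν (fun q => B q α β lam μ) p) = 0)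
    (ξ₁ ξ₂ ξ₃ : (Fin 4 → ℝ) → Fin 4 → ℝ)
    (hξ₁smooth : ∀ α, ContDiff ℝ (⊤ : ℕ∞) fun p => ξ₁ p α)
    (hξ₂smooth : ∀ α, ContDiff ℝ (⊤ : ℕ∞) fun p => ξ₂ p α)
    (hξ₃smooth : ∀ α, ContDiff ℝ (⊤ : ℕ∞) fun p => ξ₃ p α)
    (hK₁ : IsKilling ξ₁) (hK₂ : IsKilling ξ₂) (hK₃ : IsKilling ξ₃) :
    ∀ p, (∑ μ, ∑ ν, mink μ ν * pd ν (fun q => current B ξ₁ ξ₂ ξ₃ q μ) p) = 0 := by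
  intro p
  -- differentiability facts
  have hd1 : ∀ a, Differentiable ℝ fun q => ξ₁ q a := fun a => (hξ₁smooth a).differentiable (by simp)
  have hd2 : ∀ a, Differentiable ℝ fun q => ξ₂ q a := fun a => (hξ₂smooth a).differentiable (by simp)
  have hd3 : ∀ a, Differentiable ℝ fun q => ξ₃ q a := fun a => (hξ₃smooth a).differentiable (by simp)
  have hdB : ∀ a b c d, Differentiable ℝ fun q => B q a b c d :=
    fun a b c d => (hBsmooth a b c d).differentiable (by simp)
  have hFdiff : ∀ α β lam μ, Differentiable ℝ (Fsym B α β lam μ) := by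
    intro α β lam μ
    rw [show Fsym B α β lam μ = fun q => (1/6 : ℝ) * ∑ σ : Equiv.Perm (Fin 3),
      B q (![α, β, lam] (σ 0)) (![α, β, lam] (σ 1)) (![α, β, lam] (σ 2)) μ from rfl]
    exact (Differentiable.fun_sum fun σ _ => hdB _ _ _ _).const_mul _
  have hdiffP : ∀ α β lam μ, Differentiable ℝ
      (fun q => Fsym B α β lam μ q * ξ₁ q α * ξ₂ q β * ξ₃ q lam) :=
    fun α β lam μ => (((hFdiff α β lam μ).mul (hd1 α)).mul (hd2 β)).mul (hd3 lam)
  have hdiff2 : ∀ α β μ, Differentiable ℝ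
      (fun q => ∑ lam, Fsym B α β lam μ q * ξ₁ q α * ξ₂ q β * ξ₃ q lam) :=
    fun α β μ => Differentiable.fun_sum fun lam _ => hdiffP α β lam μ
  have hdiff1 : ∀ α μ, Differentiable ℝ
      (fun q => ∑ β, ∑ lam, Fsym B α β lam μ q * ξ₁ q α * ξ₂ q β * ξ₃ q lam) :=
    fun α μ => Differentiable.fun_sum fun β _ => hdiff2 α β μ
  -- derivative of the symmetrized tensor
  have hpdF : ∀ ν α β lam μ, pd ν (Fsym B α β lam μ) p
      = (1/6 : ℝ) * ∑ σ : Equiv.Perm (Fin 3),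
        pd ν (fun q => B q (![α, β, lam] (σ 0)) (![α, β, lam] (σ 1)) (![α, β, lam] (σ 2)) μ) p := by
    intro ν α β lam μ
    rw [show Fsym B α β lam μ = fun q => (1/6 : ℝ) * ∑ σ : Equiv.Perm (Fin 3),
      B q (![α, β, lam] (σ 0)) (![α, β, lam] (σ 1)) (![α, β, lam] (σ 2)) μ from rfl]
    rw [pd_const_mul ν (1/6) (fun q => ∑ σ : Equiv.Perm (Fin 3),
      B q (![α, β, lam] (σ 0)) (![α, β, lam] (σ 1)) (![α, β, lam] (σ 2)) μ) p
      ((Differentiable.fun_sum fun σ _ => hdB _ _ _ _) p)]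
    rw [pd_sum ν Finset.univ (fun (σ : Equiv.Perm (Fin 3)) q =>
      B q (![α, β, lam] (σ 0)) (![α, β, lam] (σ 1)) (![α, β, lam] (σ 2)) μ) p
      (fun σ _ => (hdB _ _ _ _) p)]
  -- derivative of the current
  have hcur : ∀ μ ν, pd ν (fun q => current B ξ₁ ξ₂ ξ₃ q μ) p
      = ∑ α, ∑ β, ∑ lam,
          (pd ν (Fsym B α β lam μ) p * ξ₁ p α * ξ₂ p β * ξ₃ p lam
          + Fsym B α β lam μ p * pd ν (fun q => ξ₁ q α) p * ξ₂ p β * ξ₃ p lam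
          + Fsym B α β lam μ p * ξ₁ p α * pd ν (fun q => ξ₂ q β) p * ξ₃ p lam
          + Fsym B α β lam μ p * ξ₁ p α * ξ₂ p β * pd ν (fun q => ξ₃ q lam) p) := by
    intro μ ν
    rw [show (fun q => current B ξ₁ ξ₂ ξ₃ q μ)
      = fun q => ∑ α, ∑ β, ∑ lam, Fsym B α β lam μ q * ξ₁ q α * ξ₂ q β * ξ₃ q lam from rfl]
    rw [pd_sum ν Finset.univ (fun (α : Fin 4) q => ∑ β, ∑ lam,
      Fsym B α β lam μ q * ξ₁ q α * ξ₂ q β * ξ₃ q lam) p (fun α _ => (hdiff1 α μ) p)]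
    refine Finset.sum_congr rfl fun α _ => ?_
    rw [pd_sum ν Finset.univ (fun (β : Fin 4) q => ∑ lam,
      Fsym B α β lam μ q * ξ₁ q α * ξ₂ q β * ξ₃ q lam) p (fun β _ => (hdiff2 α β μ) p)]
    refine Finset.sum_congr rfl fun β _ => ?_
    rw [pd_sum ν Finset.univ (fun (lam : Fin 4) q =>
      Fsym B α β lam μ q * ξ₁ q α * ξ₂ q β * ξ₃ q lam) p (fun lam _ => (hdiffP α β lam μ) p)]
    refine Finset.sum_congr rfl fun lam _ => ?_
    exact pd_mul4 ν (Fsym B α β lam μ) (fun q => ξ₁ q α) (fun q => ξ₂ q β)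
      (fun q => ξ₃ q lam) p ((hFdiff α β lam μ) p) ((hd1 α) p) ((hd2 β) p) ((hd3 lam) p)
  -- the divergence identity, diagonalized
  have hdiv' : ∀ a b c, (∑ μ, mink μ μ * pd μ (fun q => B q a b c μ) p) = 0 := by
    intro a b c
    have h := hBdiv p a b c
    calc (∑ μ, mink μ μ * pd μ (fun q => B q a b c μ) p)
        = ∑ μ, ∑ ν, mink μ ν * pd ν (fun q => B q a b c μ) p :=
          Finset.sum_congr rfl fun μ _ => (mink_contract (fun ν => pd ν (fun q => B q a b c μ) p) μ).symm
      _ = 0 := h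
  have hFdiv0 : ∀ α β lam, (∑ μ, mink μ μ * pd μ (Fsym B α β lam μ) p) = 0 := by
    intro α β lam
    calc (∑ μ, mink μ μ * pd μ (Fsym B α β lam μ) p)
        = ∑ μ, (1/6 : ℝ) * ∑ σ : Equiv.Perm (Fin 3), mink μ μ *
            pd μ (fun q => B q (![α, β, lam] (σ 0)) (![α, β, lam] (σ 1)) (![α, β, lam] (σ 2)) μ) p := by
          refine Finset.sum_congr rfl fun μ _ => ?_
          rw [hpdF]
          simp only [Finset.mul_sum]
          exact Finset.sum_congr rfl fun σ _ => by ring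
      _ = (1/6 : ℝ) * ∑ μ, ∑ σ : Equiv.Perm (Fin 3), mink μ μ *
            pd μ (fun q => B q (![α, β, lam] (σ 0)) (![α, β, lam] (σ 1)) (![α, β, lam] (σ 2)) μ) p := by
          rw [Finset.mul_sum]
      _ = (1/6 : ℝ) * ∑ σ : Equiv.Perm (Fin 3), ∑ μ, mink μ μ *
            pd μ (fun q => B q (![α, β, lam] (σ 0)) (![α, β, lam] (σ 1)) (![α, β, lam] (σ 2)) μ) p := by
          rw [Finset.sum_comm]
      _ = 0 := by rw [Finset.sum_eq_zero fun σ _ => hdiv' _ _ _, mul_zero]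
  -- symmetries of Fsym at p
  have hSsym1 : ∀ β lam a m, Fsym B a β lam m p = Fsym B m β lam a p := by
    intro β lam a m
    exact congrArg (fun z => (1/6 : ℝ) * z)
      (permsum_swap14 (fun x y z w => B p x y z w) (fun a b c d => hBpair1 p a b c d)
        (fun a b c d => hBpair2 p a b c d) (fun a b c d => hBexch p a b c d) a β lam m)
  have hSsym2 : ∀ α lam b m, Fsym B α b lam m p = Fsym B α m lam b p := by
    intro α lam b m
    exact congrArg (fun z => (1/6 : ℝ) * z)
      (permsum_swap24 (fun x y z w => B p x y z w) (fun a b c d => hBpair1 p a b c d)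
        (fun a b c d => hBpair2 p a b c d) (fun a b c d => hBexch p a b c d) α b lam m)
  have hSsym3 : ∀ α β c m, Fsym B α β c m p = Fsym B α β m c p := by
    intro α β c m
    exact congrArg (fun z => (1/6 : ℝ) * z)
      (permsum_swap34 (fun x y z w => B p x y z w) (fun a b c d => hBpair1 p a b c d)
        (fun a b c d => hBpair2 p a b c d) (fun a b c d => hBexch p a b c d) α β c m)
  -- Killing conditions, component form
  have hlower : ∀ (ξ : (Fin 4 → ℝ) → Fin 4 → ℝ) (b : Fin 4),
      (fun q => lowerIdx ξ q b) = fun q => mink b b * ξ q b := by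
    intro ξ b
    funext q
    exact mink_contract (fun ρ => ξ q ρ) b
  have hKD1 : ∀ a b, mink b b * pd a (fun q => ξ₁ q b) p
      + mink a a * pd b (fun q => ξ₁ q a) p = 0 := by
    intro a b
    have h := hK₁ p a b
    rw [hlower ξ₁ b, hlower ξ₁ a,
      pd_const_mul a (mink b b) (fun q => ξ₁ q b) p ((hd1 b) p),
      pd_const_mul b (mink a a) (fun q => ξ₁ q a) p ((hd1 a) p)] at h
    exact h
  have hKD2 : ∀ a b, mink b b * pd a (fun q => ξ₂ q b) p
      + mink a a * pd b (fun q => ξ₂ q a) p = 0 := by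
    intro a b
    have h := hK₂ p a b
    rw [hlower ξ₂ b, hlower ξ₂ a,
      pd_const_mul a (mink b b) (fun q => ξ₂ q b) p ((hd2 b) p),
      pd_const_mul b (mink a a) (fun q => ξ₂ q a) p ((hd2 a) p)] at h
    exact h
  have hKD3 : ∀ a b, mink b b * pd a (fun q => ξ₃ q b) p
      + mink a a * pd b (fun q => ξ₃ q a) p = 0 := by
    intro a b
    have h := hK₃ p a b
    rw [hlower ξ₃ b, hlower ξ₃ a,
      pd_const_mul a (mink b b) (fun q => ξ₃ q b) p ((hd3 b) p),
      pd_const_mul b (mink a a) (fun q => ξ₃ q a) p ((hd3 a) p)] at h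
    exact h
  -- the four pieces
  have hT0 : (∑ μ, ∑ α, ∑ β, ∑ lam, mink μ μ *
      (pd μ (Fsym B α β lam μ) p * ξ₁ p α * ξ₂ p β * ξ₃ p lam)) = 0 := by
    rw [sum_swap4_0]
    refine Finset.sum_eq_zero fun α _ => Finset.sum_eq_zero fun β _ =>
      Finset.sum_eq_zero fun lam _ => ?_
    calc (∑ μ, mink μ μ * (pd μ (Fsym B α β lam μ) p * ξ₁ p α * ξ₂ p β * ξ₃ p lam))
        = (∑ μ, mink μ μ * pd μ (Fsym B α β lam μ) p) * (ξ₁ p α * ξ₂ p β * ξ₃ p lam) := by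
          rw [Finset.sum_mul]
          exact Finset.sum_congr rfl fun μ _ => by ring
      _ = 0 := by rw [hFdiv0 α β lam, zero_mul]
  have hT1 : (∑ μ, ∑ α, ∑ β, ∑ lam, mink μ μ *
      (Fsym B α β lam μ p * pd μ (fun q => ξ₁ q α) p * ξ₂ p β * ξ₃ p lam)) = 0 := by
    rw [sum_swap4_1]
    refine Finset.sum_eq_zero fun β _ => Finset.sum_eq_zero fun lam _ => ?_
    have hc : (∑ μ, ∑ α, mink μ μ * Fsym B α β lam μ p * pd μ (fun q => ξ₁ q α) p) = 0 :=
      contract_zero _ _ (fun a b => hSsym1 β lam a b) (fun a b => hKD1 a b)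
    calc (∑ μ, ∑ α, mink μ μ *
          (Fsym B α β lam μ p * pd μ (fun q => ξ₁ q α) p * ξ₂ p β * ξ₃ p lam))
        = (∑ μ, ∑ α, mink μ μ * Fsym B α β lam μ p * pd μ (fun q => ξ₁ q α) p)
            * (ξ₂ p β * ξ₃ p lam) := by
          rw [Finset.sum_mul]
          refine Finset.sum_congr rfl fun μ _ => ?_
          rw [Finset.sum_mul]
          exact Finset.sum_congr rfl fun a _ => by ring
      _ = 0 := by rw [hc, zero_mul]
  have hT2 : (∑ μ, ∑ α, ∑ β, ∑ lam, mink μ μ *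
      (Fsym B α β lam μ p * ξ₁ p α * pd μ (fun q => ξ₂ q β) p * ξ₃ p lam)) = 0 := by
    rw [sum_swap4_2]
    refine Finset.sum_eq_zero fun α _ => Finset.sum_eq_zero fun lam _ => ?_
    have hc : (∑ μ, ∑ β, mink μ μ * Fsym B α β lam μ p * pd μ (fun q => ξ₂ q β) p) = 0 :=
      contract_zero _ _ (fun a b => hSsym2 α lam a b) (fun a b => hKD2 a b)
    calc (∑ μ, ∑ β, mink μ μ *
          (Fsym B α β lam μ p * ξ₁ p α * pd μ (fun q => ξ₂ q β) p * ξ₃ p lam))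
        = (∑ μ, ∑ β, mink μ μ * Fsym B α β lam μ p * pd μ (fun q => ξ₂ q β) p)
            * (ξ₁ p α * ξ₃ p lam) := by
          rw [Finset.sum_mul]
          refine Finset.sum_congr rfl fun μ _ => ?_
          rw [Finset.sum_mul]
          exact Finset.sum_congr rfl fun b _ => by ring
      _ = 0 := by rw [hc, zero_mul]
  have hT3 : (∑ μ, ∑ α, ∑ β, ∑ lam, mink μ μ *
      (Fsym B α β lam μ p * ξ₁ p α * ξ₂ p β * pd μ (fun q => ξ₃ q lam) p)) = 0 := by
    rw [sum_swap4_3]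
    refine Finset.sum_eq_zero fun α _ => Finset.sum_eq_zero fun β _ => ?_
    have hc : (∑ μ, ∑ lam, mink μ μ * Fsym B α β lam μ p * pd μ (fun q => ξ₃ q lam) p) = 0 :=
      contract_zero _ _ (fun a b => hSsym3 α β a b) (fun a b => hKD3 a b)
    calc (∑ μ, ∑ lam, mink μ μ *
          (Fsym B α β lam μ p * ξ₁ p α * ξ₂ p β * pd μ (fun q => ξ₃ q lam) p))
        = (∑ μ, ∑ lam, mink μ μ * Fsym B α β lam μ p * pd μ (fun q => ξ₃ q lam) p)
            * (ξ₁ p α * ξ₂ p β) := by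
          rw [Finset.sum_mul]
          refine Finset.sum_congr rfl fun μ _ => ?_
          rw [Finset.sum_mul]
          exact Finset.sum_congr rfl fun c _ => by ring
      _ = 0 := by rw [hc, zero_mul]
  -- assemble
  calc (∑ μ, ∑ ν, mink μ ν * pd ν (fun q => current B ξ₁ ξ₂ ξ₃ q μ) p)
      = ∑ μ, mink μ μ * pd μ (fun q => current B ξ₁ ξ₂ ξ₃ q μ) p :=
        Finset.sum_congr rfl fun μ _ =>
          mink_contract (fun ν => pd ν (fun q => current B ξ₁ ξ₂ ξ₃ q μ) p) μ
    _ = ∑ μ, mink μ μ * ∑ α, ∑ β, ∑ lam,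
          (pd μ (Fsym B α β lam μ) p * ξ₁ p α * ξ₂ p β * ξ₃ p lam
          + Fsym B α β lam μ p * pd μ (fun q => ξ₁ q α) p * ξ₂ p β * ξ₃ p lam
          + Fsym B α β lam μ p * ξ₁ p α * pd μ (fun q => ξ₂ q β) p * ξ₃ p lam
          + Fsym B α β lam μ p * ξ₁ p α * ξ₂ p β * pd μ (fun q => ξ₃ q lam) p) :=
        Finset.sum_congr rfl fun μ _ => by rw [hcur μ μ]
    _ = (∑ μ, ∑ α, ∑ β, ∑ lam, mink μ μ *
          (pd μ (Fsym B α β lam μ) p * ξ₁ p α * ξ₂ p β * ξ₃ p lam))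
        + (∑ μ, ∑ α, ∑ β, ∑ lam, mink μ μ *
          (Fsym B α β lam μ p * pd μ (fun q => ξ₁ q α) p * ξ₂ p β * ξ₃ p lam))
        + (∑ μ, ∑ α, ∑ β, ∑ lam, mink μ μ *
          (Fsym B α β lam μ p * ξ₁ p α * pd μ (fun q => ξ₂ q β) p * ξ₃ p lam))
        + (∑ μ, ∑ α, ∑ β, ∑ lam, mink μ μ *
          (Fsym B α β lam μ p * ξ₁ p α * ξ₂ p β * pd μ (fun q => ξ₃ q lam) p)) := by
        simp only [Finset.mul_sum, mul_add, Finset.sum_add_distrib]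
    _ = 0 := by rw [hT0, hT1, hT2, hT3]; ring
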